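/- arXiv:1610.00816 — 3 statements merged into one kernel-verified Lean document; each statement's English description precedes it below -/
import Mathlib

section
/- Let (G,≡,−1) be a special group and set M(G)=G∪{0} with 0 a new element. Define: a·b=0 if a=0 or b=0 and the group product otherwise; −a=(−1)·a; and a+b={b} if a=0, {a} if b=0, M(G) if a=−b with a≠0, and D_G(a,b) otherwise, where D_G(a,b)={c∈G : ∃d∈G, ⟨c,d⟩≡⟨a,b⟩}. Then (M(G),+,·,−,0,1) is a multifield. -/
/-!
Write `D(a, b)` for the set of elements represented by `⟨a, b⟩`. SG1 and SG5 make `D` symmetric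
and invariant under scaling, and SG4 lets a representation be rotated: `c ∈ D(a, b)` gives
`a ∈ D(c, −b)`; this yields reversibility and distributivity in `M(G)`.
SG2 gives `D(a, −a) = G`, matching `a + (−a) = M(G)`, and associativity of the multivalued
sum on `G` is the transitivity SG6 of `≡` on `G³`. Sums involving `0` are settled by case analysis.
-/

universe u v w

/-- The data of a multiring: a multivalued addition, a (single-valued) multiplication,
a negation map and constants `0`, `1`. -/
structure MultiringData (R : Type u) where
  add : R → R → Set R
  mul : R → R → R
  neg : R → R
  zero : R
  one : R

/-- `(R,+,·,−,0,1)` is a multiring: `(R,+,−,0)` is a commutative multigroup,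
`(R,·,1)` is a commutative monoid, `a·0 = 0`, and `c ∈ a+b → cd ∈ ad+bd`. -/
structure IsMultiring {R : Type u} (A : MultiringData R) : Prop where
  add_nonempty : ∀ a b, (A.add a b).Nonempty
  add_comm' : ∀ a b, A.add a b = A.add b a
  add_rev : ∀ {a b d}, d ∈ A.add a b → a ∈ A.add d (A.neg b) ∧ b ∈ A.add (A.neg a) d
  zero_add' : ∀ {x y}, y ∈ A.add A.zero x ↔ x = y
  add_assoc' : ∀ a b c, (⋃ t ∈ A.add a b, A.add t c) = ⋃ s ∈ A.add b c, A.add a s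
  mul_comm' : ∀ a b, A.mul a b = A.mul b a
  mul_assoc' : ∀ a b c, A.mul (A.mul a b) c = A.mul a (A.mul b c)
  one_mul' : ∀ a, A.mul A.one a = a
  mul_zero' : ∀ a, A.mul a A.zero = A.zero
  distrib : ∀ (d : R) {a b c : R}, c ∈ A.add a b → A.mul c d ∈ A.add (A.mul a d) (A.mul b d)

/-- A multifield is a multiring in which every nonzero element has a multiplicative
inverse (and `1 ≠ 0`). -/
structure IsMultifield {R : Type u} (A : MultiringData R) extends IsMultiring A : Prop where
  one_ne_zero' : A.one ≠ A.zero
  inv : ∀ a, a ≠ A.zero → ∃ b, A.mul a b = A.one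

/-- A real reduced multifield: a multifield with `a³ = a` and `a ∈ 1+1 → a = 1`. -/
def IsRealReducedMultifield {R : Type u} (A : MultiringData R) : Prop :=
  IsMultifield A ∧ (∀ a, A.mul (A.mul a a) a = a) ∧ ∀ a, a ∈ A.add A.one A.one → a = A.one

/-- A real reduced multiring: `1 ≠ 0`, `a³ = a`, `c ∈ a + ab² → c = a`, and
`c, d ∈ a² + b² → c = d`. -/
def IsRealReducedMultiring {R : Type u} (A : MultiringData R) : Prop :=
  IsMultiring A ∧ A.one ≠ A.zero ∧ (∀ a, A.mul (A.mul a a) a = a) ∧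
    (∀ a b c, c ∈ A.add a (A.mul a (A.mul b b)) → c = a) ∧
    (∀ a b c d, c ∈ A.add (A.mul a a) (A.mul b b) → d ∈ A.add (A.mul a a) (A.mul b b) → c = d)

/-- Morphisms of multirings. -/
structure IsMultiringHom {R : Type u} {S : Type v} (A : MultiringData R) (B : MultiringData S)
    (f : R → S) : Prop where
  map_add : ∀ {a b c}, c ∈ A.add a b → f c ∈ B.add (f a) (f b)
  map_neg : ∀ a, f (A.neg a) = B.neg (f a)
  map_zero : f A.zero = B.zero
  map_mul : ∀ a b, f (A.mul a b) = B.mul (f a) (f b)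
  map_one : f A.one = B.one

/-- Isomorphisms of multirings: bijective morphisms whose inverse is again a morphism. -/
def IsMultiringIso {R : Type u} {S : Type v} (A : MultiringData R) (B : MultiringData S)
    (f : R → S) : Prop :=
  IsMultiringHom A B f ∧ Function.Bijective f ∧
    ∀ a b c, f c ∈ B.add (f a) (f b) → c ∈ A.add a b
/-- The data of a special group: a group operation on `G`, the unit, a distinguished
element `−1`, and the special relation `≡` on `G²`. -/
structure SGData (G : Type u) where
  mul : G → G → G
  one : G
  negOne : G
  equiv : G × G → G × G → Prop

/-- `−a = (−1)·a` in a special group. -/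
def SGData.neg {G : Type u} (S : SGData G) (a : G) : G := S.mul S.negOne a

/-- The extension of `≡` to a binary relation on `G³`. -/
def SGData.equiv3 {G : Type u} (S : SGData G) (u v : G × G × G) : Prop :=
  ∃ x y z, S.equiv (u.1, x) (v.1, y) ∧ S.equiv (u.2.1, u.2.2) (x, z) ∧
    S.equiv (v.2.1, v.2.2) (y, z)

/-- `(G, ≡, −1)` is a special group: `G` is a group of exponent 2 and `≡` satisfies
axioms SG0–SG6. -/
structure IsSpecialGroup {G : Type u} (S : SGData G) : Prop where
  mul_comm' : ∀ a b, S.mul a b = S.mul b a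
  mul_assoc' : ∀ a b c, S.mul (S.mul a b) c = S.mul a (S.mul b c)
  one_mul' : ∀ a, S.mul S.one a = a
  exp2 : ∀ a, S.mul a a = S.one
  sg0 : Equivalence S.equiv
  sg1 : ∀ a b, S.equiv (a, b) (b, a)
  sg2 : ∀ a, S.equiv (a, S.neg a) (S.one, S.negOne)
  sg3 : ∀ a b c d, S.equiv (a, b) (c, d) → S.mul a b = S.mul c d
  sg4 : ∀ a b c d, S.equiv (a, b) (c, d) → S.equiv (a, S.neg c) (S.neg b, d)
  sg5 : ∀ a b c d g, S.equiv (a, b) (c, d) →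
    S.equiv (S.mul g a, S.mul g b) (S.mul g c, S.mul g d)
  sg6 : ∀ u v w, S.equiv3 u v → S.equiv3 v w → S.equiv3 u w

/-- `c ∈ D_G(a,b)`: `c` is represented by the form `⟨a,b⟩`. -/
def SGData.rep {G : Type u} (S : SGData G) (a b c : G) : Prop := ∃ d, S.equiv (c, d) (a, b)

/-- The multiring data `M(G) = G ∪ {0}` associated to a special group: the group product
extended by `0`, `−a = (−1)·a`, and `a + b = {b}` if `a = 0`, `{a}` if `b = 0`, `M(G)` if
`a = −b ≠ 0`, and `D_G(a,b)` otherwise. -/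
def MofSG {G : Type u} (S : SGData G) : MultiringData (Option G) where
  add a b :=
    {c | (a = none ∧ c = b) ∨ (b = none ∧ c = a) ∨
      (∃ g : G, a = some g ∧ b = some (S.neg g)) ∨
      (∃ g k m : G, a = some g ∧ b = some k ∧ k ≠ S.neg g ∧ c = some m ∧ S.rep g k m)}
  mul a b :=
    match a, b with
    | some g, some k => some (S.mul g k)
    | _, _ => none
  neg a := a.map S.neg
  zero := none
  one := some S.one

namespace IsSpecialGroup

variable {G : Type u} {S : SGData G}

theorem neg_neg (h : IsSpecialGroup S) (a : G) : S.neg (S.neg a) = a := by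
  rw [SGData.neg, SGData.neg, ← h.mul_assoc', h.exp2, h.one_mul']

theorem neg_mul (h : IsSpecialGroup S) (a b : G) : S.mul (S.neg a) b = S.neg (S.mul a b) :=
  h.mul_assoc' _ _ _

theorem rep_refl (h : IsSpecialGroup S) (a b : G) : S.rep a b a :=
  ⟨b, h.sg0.refl _⟩

theorem rep_symm (h : IsSpecialGroup S) {a b c : G} (hc : S.rep a b c) : S.rep b a c :=
  let ⟨d, hd⟩ := hc
  ⟨d, h.sg0.trans hd (h.sg1 a b)⟩

theorem rep_mul_left (h : IsSpecialGroup S) (t : G) {a b c : G} (hc : S.rep a b c) :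
    S.rep (S.mul t a) (S.mul t b) (S.mul t c) :=
  let ⟨d, hd⟩ := hc
  ⟨S.mul t d, h.sg5 _ _ _ _ t hd⟩

theorem rep_self_neg (h : IsSpecialGroup S) (a c : G) : S.rep a (S.neg a) c :=
  ⟨S.neg c, h.sg0.trans (h.sg2 c) (h.sg0.symm (h.sg2 a))⟩

theorem rep_rotate (h : IsSpecialGroup S) {a b c : G} (hc : S.rep a b c) :
    S.rep c (S.neg b) a := by
  obtain ⟨d, hd⟩ := hc
  have hcd : S.equiv (c, S.neg b) (S.neg d, a) := h.sg4 _ _ _ _ (h.sg0.trans hd (h.sg1 a b))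
  exact ⟨S.neg d, h.sg0.trans (h.sg1 a (S.neg d)) (h.sg0.symm hcd)⟩

theorem rep_neg_of_rep (h : IsSpecialGroup S) {a b c : G} (hc : S.rep a b c) :
    S.rep b (S.neg c) (S.neg a) := by
  have hneg : S.rep (S.neg c) (S.neg (S.neg b)) (S.neg a) :=
    h.rep_rotate (h.rep_mul_left S.negOne hc)
  rw [h.neg_neg] at hneg
  exact h.rep_symm hneg

theorem exists_rep_of_rep_of_rep (h : IsSpecialGroup S) {a b c d e : G}
    (hd : S.rep a b d) (he : S.rep d c e) : ∃ p, S.rep b c p ∧ S.rep a p e := by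
  obtain ⟨x, hx⟩ := hd
  obtain ⟨y, hy⟩ := he
  have hab : S.equiv3 (d, c, x) (a, c, b) := ⟨x, b, c, hx, h.sg1 c x, h.sg1 c b⟩
  have hde : S.equiv3 (e, y, x) (d, c, x) := ⟨y, c, x, hy, h.sg0.refl _, h.sg0.refl _⟩
  obtain ⟨p, q, z, hpq, -, hqz⟩ := h.sg6 _ _ _ hde hab
  exact ⟨q, h.rep_symm ⟨z, h.sg0.symm hqz⟩, ⟨p, hpq⟩⟩

end IsSpecialGroup

namespace MofSG

variable {G : Type u} {S : SGData G}

theorem mem_add_none_left {b x : Option G} : x ∈ (MofSG S).add none b ↔ x = b := by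
  cases b <;> simp [MofSG]

theorem mem_add_none_right {a x : Option G} : x ∈ (MofSG S).add a none ↔ x = a := by
  cases a <;> simp [MofSG]

theorem none_mem_add {a b : G} : none ∈ (MofSG S).add (some a) (some b) ↔ b = S.neg a := by
  simp [MofSG]

theorem some_mem_add (h : IsSpecialGroup S) {a b c : G} :
    some c ∈ (MofSG S).add (some a) (some b) ↔ S.rep a b c := by
  by_cases hb : b = S.neg a
  · simp [MofSG, hb, h.rep_self_neg]
  · simp [MofSG, hb]

end MofSG

namespace MofSG

variable {G : Type u} {S : SGData G}

theorem add_nonempty (h : IsSpecialGroup S) (a b : Option G) : ((MofSG S).add a b).Nonempty := by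
  rcases a with _ | a
  · exact ⟨b, mem_add_none_left.2 rfl⟩
  rcases b with _ | b
  · exact ⟨some a, mem_add_none_right.2 rfl⟩
  · exact ⟨some a, (some_mem_add h).2 (h.rep_refl a b)⟩

theorem add_comm (h : IsSpecialGroup S) (a b : Option G) :
    (MofSG S).add a b = (MofSG S).add b a := by
  ext x
  rcases a with _ | a
  · rw [mem_add_none_left, mem_add_none_right]
  rcases b with _ | b
  · rw [mem_add_none_left, mem_add_none_right]
  rcases x with _ | c
  · rw [none_mem_add, none_mem_add]
    exact ⟨fun hb => by rw [hb, h.neg_neg], fun ha => by rw [ha, h.neg_neg]⟩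
  · rw [some_mem_add h, some_mem_add h]
    exact ⟨h.rep_symm, h.rep_symm⟩

theorem zero_add {x y : Option G} : y ∈ (MofSG S).add (MofSG S).zero x ↔ x = y :=
  mem_add_none_left.trans eq_comm

theorem mem_add_neg_of_mem_add (h : IsSpecialGroup S) {a b d : Option G}
    (hd : d ∈ (MofSG S).add a b) : a ∈ (MofSG S).add d ((MofSG S).neg b) := by
  rcases a with _ | a
  · rw [mem_add_none_left] at hd
    subst hd
    rcases d with _ | d
    · exact mem_add_none_left.2 rfl
    · exact none_mem_add.2 rfl
  rcases b with _ | b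
  · rw [mem_add_none_right] at hd
    subst hd
    exact mem_add_none_right.2 rfl
  rcases d with _ | d
  · rw [none_mem_add] at hd
    subst hd
    exact mem_add_none_left.2 ((congrArg some (h.neg_neg a)).symm)
  · exact (some_mem_add h).2 (h.rep_rotate ((some_mem_add h).1 hd))

theorem add_rev (h : IsSpecialGroup S) {a b d : Option G} (hd : d ∈ (MofSG S).add a b) :
    a ∈ (MofSG S).add d ((MofSG S).neg b) ∧ b ∈ (MofSG S).add ((MofSG S).neg a) d := by
  refine ⟨mem_add_neg_of_mem_add h hd, ?_⟩
  rw [add_comm h] at hd ⊢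
  exact mem_add_neg_of_mem_add h hd

theorem exists_mem_add_of_mem_add_of_mem_add (h : IsSpecialGroup S) {a b c t x : Option G}
    (ht : t ∈ (MofSG S).add a b) (hx : x ∈ (MofSG S).add t c) :
    ∃ s ∈ (MofSG S).add b c, x ∈ (MofSG S).add a s := by
  rcases a with _ | a
  · rw [mem_add_none_left] at ht
    subst ht
    exact ⟨x, hx, mem_add_none_left.2 rfl⟩
  rcases b with _ | b
  · rw [mem_add_none_right] at ht
    subst ht
    exact ⟨c, mem_add_none_left.2 rfl, hx⟩
  rcases c with _ | c
  · rw [mem_add_none_right] at hx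
    subst hx
    exact ⟨some b, mem_add_none_right.2 rfl, ht⟩
  rcases t with _ | t
  · rw [none_mem_add] at ht
    rw [mem_add_none_left] at hx
    subst ht hx
    exact ⟨some c, (some_mem_add h).2 (h.rep_symm (h.rep_refl c _)),
      (some_mem_add h).2 (h.rep_symm (h.rep_refl c a))⟩
  rw [some_mem_add h] at ht
  rcases x with _ | x
  · rw [none_mem_add] at hx
    subst hx
    exact ⟨some (S.neg a), (some_mem_add h).2 (h.rep_neg_of_rep ht), none_mem_add.2 rfl⟩
  · obtain ⟨p, hp, hx⟩ := h.exists_rep_of_rep_of_rep ht ((some_mem_add h).1 hx)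
    exact ⟨some p, (some_mem_add h).2 hp, (some_mem_add h).2 hx⟩

theorem add_assoc (h : IsSpecialGroup S) (a b c : Option G) :
    (⋃ t ∈ (MofSG S).add a b, (MofSG S).add t c) =
      ⋃ s ∈ (MofSG S).add b c, (MofSG S).add a s := by
  ext x
  simp only [Set.mem_iUnion, exists_prop]
  constructor
  · rintro ⟨t, ht, hx⟩
    exact exists_mem_add_of_mem_add_of_mem_add h ht hx
  · rintro ⟨s, hs, hx⟩
    rw [add_comm h] at hs hx
    obtain ⟨t, ht, hx⟩ := exists_mem_add_of_mem_add_of_mem_add h hs hx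
    rw [add_comm h] at ht hx
    exact ⟨t, ht, hx⟩

@[simp]
theorem mul_some_some (a b : G) : (MofSG S).mul (some a) (some b) = some (S.mul a b) := rfl

@[simp]
theorem mul_none_left (a : Option G) : (MofSG S).mul none a = none := rfl

@[simp]
theorem mul_none_right (a : Option G) : (MofSG S).mul a none = none := by
  cases a <;> rfl

theorem mul_comm (h : IsSpecialGroup S) (a b : Option G) :
    (MofSG S).mul a b = (MofSG S).mul b a := by
  rcases a with _ | a <;> rcases b with _ | b <;> simp [h.mul_comm']

theorem mul_assoc (h : IsSpecialGroup S) (a b c : Option G) :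
    (MofSG S).mul ((MofSG S).mul a b) c = (MofSG S).mul a ((MofSG S).mul b c) := by
  rcases a with _ | a <;> rcases b with _ | b <;> rcases c with _ | c <;> simp [h.mul_assoc']

theorem one_mul (h : IsSpecialGroup S) (a : Option G) : (MofSG S).mul (MofSG S).one a = a := by
  rcases a with _ | a
  · rfl
  · exact congrArg some (h.one_mul' a)

theorem exists_mul_eq_one (h : IsSpecialGroup S) (a : Option G) (ha : a ≠ (MofSG S).zero) :
    ∃ b, (MofSG S).mul a b = (MofSG S).one := by
  obtain ⟨a, rfl⟩ := Option.ne_none_iff_exists'.1 ha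
  exact ⟨some a, congrArg some (h.exp2 a)⟩

theorem mul_mem_add (h : IsSpecialGroup S) (d : Option G) {a b c : Option G}
    (hc : c ∈ (MofSG S).add a b) :
    (MofSG S).mul c d ∈ (MofSG S).add ((MofSG S).mul a d) ((MofSG S).mul b d) := by
  rcases d with _ | t
  · simp only [mul_none_right]
    exact mem_add_none_left.2 rfl
  rcases a with _ | a
  · rw [mem_add_none_left] at hc
    subst hc
    exact mem_add_none_left.2 rfl
  rcases b with _ | b
  · rw [mem_add_none_right] at hc
    subst hc
    exact mem_add_none_right.2 rfl
  rcases c with _ | c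
  · rw [none_mem_add] at hc
    subst hc
    exact none_mem_add.2 (h.neg_mul a t)
  · have hct := h.rep_mul_left t ((some_mem_add h).1 hc)
    simp only [h.mul_comm' t] at hct
    exact (some_mem_add h).2 hct

end MofSG

/-- For a special group `(G, ≡, −1)`, the structure `M(G) = G ∪ {0}` is a multifield. -/
theorem sg_to_multifield {G : Type u} (S : SGData G) (h : IsSpecialGroup S) :
    IsMultifield (MofSG S) :=
  { add_nonempty := MofSG.add_nonempty h
    add_comm' := MofSG.add_comm h
    add_rev := MofSG.add_rev h
    zero_add' := MofSG.zero_add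
    add_assoc' := MofSG.add_assoc h
    mul_comm' := MofSG.mul_comm h
    mul_assoc' := MofSG.mul_assoc h
    one_mul' := MofSG.one_mul h
    mul_zero' := MofSG.mul_none_right
    distrib := MofSG.mul_mem_add h
    one_ne_zero' := Option.some_ne_none _
    inv := MofSG.exists_mul_eq_one h }
end

section
/- The correspondence G↦M(G)=G∪{0} extends to a faithful functor M from the category of special groups (with SG-morphisms) to the category of multifields (with multiring morphisms): every SG-morphism f:G→H extends (by f(0)=0) to a multiring morphism M(f):M(G)→M(H), composition is preserved, and M(f)=M(g) implies f=g. -/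
universe u v w

/-- A morphism of special groups: a group homomorphism with `f(−1) = −1` preserving the
special relation. -/
def IsSGMorphism {G : Type u} {H : Type v} (S : SGData G) (T : SGData H) (f : G → H) : Prop :=
  (∀ a b, f (S.mul a b) = T.mul (f a) (f b)) ∧ f S.negOne = T.negOne ∧
    ∀ a b c d, S.equiv (a, b) (c, d) → T.equiv (f a, f b) (f c, f d)

/-! An SG-morphism commutes with `−`, sends `1` to `1` (since `1 = (−1)²`) and carries
representations `c ∈ D_G(a,b)` to representations `f c ∈ D_H(f a, f b)`. Each clause in the
definition of `a + b` in `M(G)` is therefore sent to the corresponding clause in `M(H)`, except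
that a nondegenerate sum `a + b` with `b ≠ −a` may become degenerate, `f b = −f a`; then
`f a + f b` is all of `M(H)` and contains everything. Faithfulness is the injectivity of
`Option.map`. -/

namespace IsSGMorphism

variable {G : Type u} {H : Type v} {S : SGData G} {T : SGData H} {f : G → H}

theorem map_neg (hf : IsSGMorphism S T f) (a : G) : f (S.neg a) = T.neg (f a) := by
  simp only [SGData.neg, hf.1, hf.2.1]

theorem map_one (hf : IsSGMorphism S T f) (hS : IsSpecialGroup S) (hT : IsSpecialGroup T) :
    f S.one = T.one := by
  rw [← hS.exp2 S.negOne, hf.1, hf.2.1, hT.exp2]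

theorem map_rep (hf : IsSGMorphism S T f) {a b c : G} (h : S.rep a b c) :
    T.rep (f a) (f b) (f c) :=
  let ⟨d, hd⟩ := h
  ⟨f d, hf.2.2 _ _ _ _ hd⟩

theorem map_add_mofSG (hf : IsSGMorphism S T f) {a b c : Option G}
    (h : c ∈ (MofSG S).add a b) :
    c.map f ∈ (MofSG T).add (a.map f) (b.map f) := by
  rcases h with ⟨rfl, rfl⟩ | ⟨rfl, rfl⟩ | ⟨g, rfl, rfl⟩ | ⟨g, k, m, rfl, rfl, -, rfl, hrep⟩
  · exact Or.inl ⟨rfl, rfl⟩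
  · exact Or.inr (Or.inl ⟨rfl, rfl⟩)
  · exact Or.inr (Or.inr (Or.inl ⟨f g, rfl, by rw [Option.map_some, hf.map_neg]⟩))
  · by_cases hfk : f k = T.neg (f g)
    · exact Or.inr (Or.inr (Or.inl ⟨f g, rfl, by rw [Option.map_some, hfk]⟩))
    · exact Or.inr (Or.inr (Or.inr ⟨f g, f k, f m, rfl, rfl, hfk, rfl, hf.map_rep hrep⟩))

theorem isMultiringHom_optionMap (hf : IsSGMorphism S T f) (hS : IsSpecialGroup S)
    (hT : IsSpecialGroup T) : IsMultiringHom (MofSG S) (MofSG T) (Option.map f) where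
  map_add := hf.map_add_mofSG
  map_neg a := by cases a <;> simp [MofSG, hf.map_neg]
  map_zero := rfl
  map_mul a b := by cases a <;> cases b <;> simp [MofSG, hf.1]
  map_one := by simp [MofSG, hf.map_one hS hT]

end IsSGMorphism

/-- The correspondence `G ↦ M(G) = G ∪ {0}` extends to a faithful functor from special groups
to multifields: every SG-morphism `f` extends (by `f(0) = 0`) to a multiring morphism
`M(f) : M(G) → M(H)`, composition is preserved, and `M(f) = M(g)` implies `f = g`. -/
theorem sg_to_multifield_faithful_functor :
    (∀ (G H : Type u) (S : SGData G) (T : SGData H), IsSpecialGroup S → IsSpecialGroup T →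
      ∀ f : G → H, IsSGMorphism S T f →
        IsMultiringHom (MofSG S) (MofSG T) (Option.map f)) ∧
    (∀ (G H K : Type u) (f : G → H) (g : H → K),
      Option.map (g ∘ f) = Option.map g ∘ Option.map f) ∧
    (∀ (G H : Type u) (S : SGData G) (T : SGData H), IsSpecialGroup S → IsSpecialGroup T →
      ∀ f g : G → H, IsSGMorphism S T f → IsSGMorphism S T g →
        Option.map f = Option.map g → f = g) :=
  ⟨fun _ _ _ _ hS hT _ hf => hf.isMultiringHom_optionMap hS hT,
    fun _ _ _ f g => (Option.map_comp_map f g).symm,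
    fun _ _ _ _ _ _ _ _ _ _ h => Option.map_injective' h⟩
end

section
/- Let (G,·,1,0,−1,D) be a real semigroup. Define a+b := D^t(a,b) and −g := (−1)·g. Then (G,+,·,−,0,1) is a real reduced multiring. -/
universe u v w

/-- The data of a real semigroup: a ternary semigroup `(S, ·, 1, 0, −1)` together with a
ternary representation relation `D` (`D a b c` means `a ∈ D(b,c)`). -/
structure RSData (S : Type u) where
  mul : S → S → S
  one : S
  zero : S
  negOne : S
  D : S → S → S → Prop

/-- `−a = (−1)·a`. -/
def RSData.neg {S : Type u} (R : RSData S) (a : S) : S := R.mul R.negOne a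

/-- The transversal representation:
`a ∈ D^t(b,c) ⟺ a ∈ D(b,c) ∧ −b ∈ D(−a,c) ∧ −c ∈ D(b,−a)`. -/
def RSData.Dt {S : Type u} (R : RSData S) (a b c : S) : Prop :=
  R.D a b c ∧ R.D (R.neg b) (R.neg a) c ∧ R.D (R.neg c) b (R.neg a)

/-- A real semigroup: a ternary semigroup (TS1–TS5) with a ternary relation `D`
satisfying axioms RS0–RS8. -/
structure IsRealSemigroup {S : Type u} (R : RSData S) : Prop where
  mul_comm' : ∀ a b, R.mul a b = R.mul b a
  mul_assoc' : ∀ a b c, R.mul (R.mul a b) c = R.mul a (R.mul b c)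
  one_mul' : ∀ a, R.mul R.one a = a
  cube : ∀ a, R.mul (R.mul a a) a = a
  negone_ne_one : R.negOne ≠ R.one
  negone_sq : R.mul R.negOne R.negOne = R.one
  mul_zero' : ∀ a, R.mul a R.zero = R.zero
  neg_fix : ∀ a, a = R.neg a → a = R.zero
  rs0 : ∀ a b c, R.D c a b ↔ R.D c b a
  rs1 : ∀ a b, R.D a a b
  rs2 : ∀ a b c d, R.D a b c → R.D (R.mul a d) (R.mul b d) (R.mul c d)
  rs3 : ∀ a b c d e, R.Dt a b c → R.Dt c d e → ∃ x, R.Dt x b d ∧ R.Dt a x e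
  rs4 : ∀ a b c d e, R.D e (R.mul (R.mul c c) a) (R.mul (R.mul d d) b) → R.D e a b
  rs5 : ∀ a b c d e, R.mul a d = R.mul b d → R.mul a e = R.mul b e → R.D c d e →
    R.mul a c = R.mul b c
  rs6 : ∀ a b c, R.D c a b → R.Dt c (R.mul (R.mul c c) a) (R.mul (R.mul c c) b)
  rs7 : ∀ a b, (∃ u, R.Dt u a (R.neg b) ∧ R.Dt u b (R.neg a)) → a = b
  rs8 : ∀ a b c, R.D a b c → R.D (R.mul a a) (R.mul b b) (R.mul c c)

/-- The multiring data associated to a real semigroup: `a + b = D^t(a,b)`. -/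
def MofRS {S : Type u} (R : RSData S) : MultiringData S where
  add a b := {c | R.Dt c a b}
  mul := R.mul
  neg := R.neg
  zero := R.zero
  one := R.one

/-- The real semigroup data associated to a multiring:
`d ∈ D(a,b) ⟺ d ∈ d²a + d²b`. -/
def SofMR {T : Type u} (A : MultiringData T) : RSData T where
  mul := A.mul
  one := A.one
  zero := A.zero
  negOne := A.neg A.one
  D d a b := d ∈ A.add (A.mul (A.mul d d) a) (A.mul (A.mul d d) b)

namespace RealSGAux

variable {S : Type u} {R : RSData S}

lemma mul_one (h : IsRealSemigroup R) (a : S) : R.mul a R.one = a := by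
  rw [h.mul_comm']; exact h.one_mul' a

lemma zero_mul (h : IsRealSemigroup R) (a : S) : R.mul R.zero a = R.zero := by
  rw [h.mul_comm']; exact h.mul_zero' a

lemma neg_neg (h : IsRealSemigroup R) (a : S) : R.neg (R.neg a) = a := by
  show R.mul R.negOne (R.mul R.negOne a) = a
  rw [← h.mul_assoc', h.negone_sq, h.one_mul']

lemma neg_zero (h : IsRealSemigroup R) : R.neg R.zero = R.zero := h.mul_zero' R.negOne

lemma neg_mul (h : IsRealSemigroup R) (a b : S) :
    R.mul (R.neg a) b = R.neg (R.mul a b) := h.mul_assoc' R.negOne a b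

lemma mul_neg (h : IsRealSemigroup R) (a b : S) :
    R.mul a (R.neg b) = R.neg (R.mul a b) := by
  rw [h.mul_comm' a, neg_mul h, h.mul_comm' b]

lemma neg_mul_neg (h : IsRealSemigroup R) (a b : S) :
    R.mul (R.neg a) (R.neg b) = R.mul a b := by
  rw [neg_mul h, mul_neg h, neg_neg h]

lemma pow4 (h : IsRealSemigroup R) (a : S) :
    R.mul (R.mul a a) (R.mul a a) = R.mul a a := by
  rw [← h.mul_assoc', h.cube]

lemma Dneg (h : IsRealSemigroup R) {a b c : S} (hd : R.D a b c) :
    R.D (R.neg a) (R.neg b) (R.neg c) := by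
  have := h.rs2 a b c R.negOne hd
  simpa only [h.mul_comm' _ R.negOne, RSData.neg] using this

lemma Dt_sym (h : IsRealSemigroup R) {c a b : S} (hc : R.Dt c a b) : R.Dt c b a := by
  obtain ⟨h1, h2, h3⟩ := hc
  exact ⟨(h.rs0 _ _ _).1 h1, (h.rs0 _ _ _).1 h3, (h.rs0 _ _ _).1 h2⟩

lemma Dt_neg (h : IsRealSemigroup R) {c a b : S} (hc : R.Dt c a b) :
    R.Dt (R.neg c) (R.neg a) (R.neg b) := by
  obtain ⟨h1, h2, h3⟩ := hc
  refine ⟨Dneg h h1, ?_, ?_⟩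
  · simpa only [neg_neg h] using Dneg h h2
  · simpa only [neg_neg h] using Dneg h h3

lemma Dt_scale (h : IsRealSemigroup R) {c a b : S} (hc : R.Dt c a b) (d : S) :
    R.Dt (R.mul c d) (R.mul a d) (R.mul b d) := by
  obtain ⟨h1, h2, h3⟩ := hc
  refine ⟨h.rs2 _ _ _ d h1, ?_, ?_⟩
  · simpa only [neg_mul h] using h.rs2 _ _ _ d h2
  · simpa only [neg_mul h] using h.rs2 _ _ _ d h3

lemma Dt_rev1 (h : IsRealSemigroup R) {d a b : S} (hd : R.Dt d a b) :
    R.Dt a d (R.neg b) := by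
  obtain ⟨h1, h2, h3⟩ := hd
  refine ⟨?_, Dneg h h1, ?_⟩
  · simpa only [neg_neg h] using Dneg h h2
  · simpa only [neg_neg h] using Dneg h ((h.rs0 _ _ _).1 h3)

lemma Dt_rev2 (h : IsRealSemigroup R) {d a b : S} (hd : R.Dt d a b) :
    R.Dt b (R.neg a) d := by
  obtain ⟨h1, h2, h3⟩ := hd
  refine ⟨?_, ?_, Dneg h h1⟩
  · simpa only [neg_neg h] using Dneg h h3
  · simpa only [neg_neg h] using Dneg h ((h.rs0 _ _ _).1 h2)

lemma D_zero (h : IsRealSemigroup R) (a b : S) : R.D R.zero a b := by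
  apply h.rs4 a b R.zero R.zero R.zero
  have h0 : R.D R.zero R.zero R.zero := h.rs1 _ _
  simpa only [h.mul_zero', zero_mul h] using h0

lemma zero_mem (h : IsRealSemigroup R) (a : S) : R.Dt R.zero a (R.neg a) := by
  refine ⟨D_zero h _ _, ?_, ?_⟩
  · rw [neg_zero h]
    exact (h.rs0 _ _ _).1 (h.rs1 (R.neg a) R.zero)
  · rw [neg_neg h, neg_zero h]
    exact h.rs1 a R.zero

lemma self_mem (h : IsRealSemigroup R) (a z : S) :
    R.Dt a a (R.mul (R.mul a a) z) := by
  have := h.rs6 a z a (h.rs1 a z)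
  rwa [h.cube] at this

lemma zero_add_iff (h : IsRealSemigroup R) {x y : S} :
    R.Dt y R.zero x ↔ x = y := by
  constructor
  · intro hy
    have r1 : R.Dt R.zero y (R.neg x) := Dt_rev1 h hy
    have r2 : R.Dt x (R.neg R.zero) y := Dt_rev2 h hy
    rw [neg_zero h] at r2
    have r3 : R.Dt R.zero x (R.neg y) := Dt_rev1 h r2
    exact h.rs7 x y ⟨R.zero, r3, r1⟩
  · rintro rfl
    refine ⟨(h.rs0 _ _ _).1 (h.rs1 x R.zero), ?_, ?_⟩
    · rw [neg_zero h]; exact D_zero h _ _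
    · exact (h.rs0 _ _ _).1 (h.rs1 (R.neg x) R.zero)

lemma anti_mem (h : IsRealSemigroup R) (a y : S) :
    R.Dt (R.mul (R.mul a a) y) a (R.neg a) := by
  have second : R.Dt (R.neg a) (R.neg a) (R.mul (R.mul a a) (R.neg y)) := by
    have := self_mem h (R.neg a) (R.neg y)
    rwa [neg_mul_neg h] at this
  obtain ⟨x, hx1, hx2⟩ := h.rs3 R.zero a (R.neg a) (R.neg a)
    (R.mul (R.mul a a) (R.neg y)) (zero_mem h a) second
  have := (zero_add_iff h).1 (Dt_rev1 h hx2)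
  rw [mul_neg h, neg_neg h] at this
  rw [← this] at hx1
  exact hx1

lemma add_nonempty' (h : IsRealSemigroup R) (a b : S) : ∃ x, R.Dt x a b := by
  have first : R.Dt a a (R.mul (R.mul a a) (R.mul b b)) := self_mem h a (R.mul b b)
  have second : R.Dt (R.mul (R.mul a a) (R.mul b b)) b (R.neg b) := by
    have := anti_mem h b (R.mul a a)
    rwa [h.mul_comm' (R.mul b b)] at this
  obtain ⟨x, hx1, _⟩ := h.rs3 a a (R.mul (R.mul a a) (R.mul b b)) b (R.neg b) first second
  exact ⟨x, hx1⟩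

lemma idem (h : IsRealSemigroup R) {a b c : S}
    (hc : R.D c (R.mul a a) (R.mul b b)) : R.mul c c = c := by
  have h2 : R.D (R.mul c c) (R.mul (R.mul a a) c) (R.mul (R.mul b b) c) :=
    h.rs2 _ _ _ c hc
  have h3 : R.D (R.mul c c) c c := h.rs4 c c a b (R.mul c c) h2
  have h4 := h.rs6 c c (R.mul c c) h3
  rw [show R.mul (R.mul (R.mul c c) (R.mul c c)) c = c by rw [pow4 h, h.cube]] at h4
  obtain ⟨g1, g2, g3⟩ := h4
  have hA : R.D c (R.mul c c) (R.neg c) := by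
    simpa only [neg_neg h] using Dneg h g2
  have hu1 : R.Dt c (R.mul c c) (R.neg c) := by
    refine ⟨hA, ?_, ?_⟩
    · exact Dneg h h3
    · simpa only [neg_neg h] using hA
  have hu2 : R.Dt c c (R.neg (R.mul c c)) := by
    have := h.rs6 c R.negOne c (h.rs1 c R.negOne)
    rw [h.cube] at this
    rwa [show R.mul (R.mul c c) R.negOne = R.neg (R.mul c c) by
      rw [h.mul_comm']; rfl] at this
  exact h.rs7 (R.mul c c) c ⟨c, hu1, hu2⟩

lemma sq_fix (h : IsRealSemigroup R) {a b c : S}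
    (hc : R.Dt c (R.mul a a) (R.mul b b)) :
    R.mul (R.mul a a) c = R.mul a a := by
  have hcc : R.mul c c = c := idem h hc.1
  have hb : R.Dt (R.mul b b) (R.neg (R.mul a a)) c := Dt_rev2 h hc
  have ha : R.Dt (R.mul a a) c (R.neg (R.mul b b)) := Dt_rev1 h hc
  have U1 : R.Dt (R.mul (R.mul a a) (R.mul b b)) (R.mul (R.mul a a) c)
      (R.neg (R.mul a a)) := by
    have := Dt_scale h hb (R.mul a a)
    rw [h.mul_comm' (R.mul b b), neg_mul h, pow4 h, h.mul_comm' c] at this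
    exact Dt_sym h this
  have h8 : R.D (R.mul a a) c (R.mul b b) := by
    have := h.rs8 _ _ _ ha.1
    rwa [pow4 h, hcc, neg_mul_neg h, pow4 h] at this
  have hii : R.D (R.mul a a) (R.mul (R.mul a a) c) (R.mul (R.mul a a) (R.mul b b)) := by
    have := h.rs2 _ _ _ (R.mul a a) h8
    rwa [pow4 h, h.mul_comm' c, h.mul_comm' (R.mul b b)] at this
  have hiii : R.D (R.mul (R.mul a a) c) (R.mul a a)
      (R.neg (R.mul (R.mul a a) (R.mul b b))) := by
    apply h.rs4 (R.mul a a) (R.neg (R.mul (R.mul a a) (R.mul b b))) c R.one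
    have e1 : R.mul (R.mul c c) (R.mul a a) = R.mul (R.mul a a) c := by
      rw [hcc, h.mul_comm']
    have e2 : R.mul (R.mul R.one R.one) (R.neg (R.mul (R.mul a a) (R.mul b b)))
        = R.neg (R.mul (R.mul a a) (R.mul b b)) := by
      rw [h.one_mul', h.one_mul']
    rw [e1, e2]
    exact h.rs1 _ _
  have hi : R.D (R.mul (R.mul a a) (R.mul b b)) (R.mul a a)
      (R.neg (R.mul (R.mul a a) c)) := by
    apply h.rs4 (R.mul a a) (R.neg (R.mul (R.mul a a) c)) b R.one
    have e1 : R.mul (R.mul b b) (R.mul a a) = R.mul (R.mul a a) (R.mul b b) :=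
      h.mul_comm' _ _
    have e2 : R.mul (R.mul R.one R.one) (R.neg (R.mul (R.mul a a) c))
        = R.neg (R.mul (R.mul a a) c) := by rw [h.one_mul', h.one_mul']
    rw [e1, e2]
    exact h.rs1 _ _
  have U2 : R.Dt (R.mul (R.mul a a) (R.mul b b)) (R.mul a a)
      (R.neg (R.mul (R.mul a a) c)) := by
    refine ⟨hi, ?_, ?_⟩
    · exact Dneg h ((h.rs0 _ _ _).1 hii)
    · simpa only [neg_neg h] using hiii
  exact h.rs7 _ _ ⟨_, U1, U2⟩

lemma sq_add_unique (h : IsRealSemigroup R) {a b c d : S}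
    (hc : R.Dt c (R.mul a a) (R.mul b b)) (hd : R.Dt d (R.mul a a) (R.mul b b)) :
    c = d := by
  have hac : R.mul (R.mul a a) c = R.mul a a := sq_fix h hc
  have hbc : R.mul (R.mul b b) c = R.mul b b := sq_fix h (Dt_sym h hc)
  have had : R.mul (R.mul a a) d = R.mul a a := sq_fix h hd
  have hbd : R.mul (R.mul b b) d = R.mul b b := sq_fix h (Dt_sym h hd)
  have hcc : R.mul c c = c := idem h hc.1
  have hdd : R.mul d d = d := idem h hd.1
  have h8c : R.D (R.mul c c) (R.mul a a) (R.mul b b) := by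
    have := h.rs8 _ _ _ hc.1
    rwa [pow4 h, pow4 h] at this
  have h8d : R.D (R.mul d d) (R.mul a a) (R.mul b b) := by
    have := h.rs8 _ _ _ hd.1
    rwa [pow4 h, pow4 h] at this
  have ea : R.mul c (R.mul a a) = R.mul d (R.mul a a) := by
    rw [h.mul_comm' c, h.mul_comm' d, hac, had]
  have eb : R.mul c (R.mul b b) = R.mul d (R.mul b b) := by
    rw [h.mul_comm' c, h.mul_comm' d, hbc, hbd]
  have e1 : R.mul c (R.mul c c) = R.mul d (R.mul c c) :=
    h.rs5 c d (R.mul c c) (R.mul a a) (R.mul b b) ea eb h8c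
  have e2 : R.mul c (R.mul d d) = R.mul d (R.mul d d) :=
    h.rs5 c d (R.mul d d) (R.mul a a) (R.mul b b) ea eb h8d
  rw [hcc, hcc] at e1
  rw [hdd, hdd] at e2
  calc c = R.mul d c := e1
    _ = R.mul c d := h.mul_comm' d c
    _ = d := e2

lemma add_self_sq (h : IsRealSemigroup R) {a b c : S}
    (hc : R.Dt c a (R.mul a (R.mul b b))) : c = a := by
  letI : Std.Associative R.mul := ⟨h.mul_assoc'⟩
  letI : Std.Commutative R.mul := ⟨h.mul_comm'⟩
  have h1 := Dt_scale h hc a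
  rw [show R.mul (R.mul a (R.mul b b)) a = R.mul (R.mul a b) (R.mul a b) by ac_rfl] at h1
  have h3 : R.Dt (R.mul a a) (R.mul a a) (R.mul (R.mul a b) (R.mul a b)) := by
    have := self_mem h (R.mul a a) (R.mul b b)
    rw [pow4 h] at this
    rwa [show R.mul (R.mul a a) (R.mul b b) = R.mul (R.mul a b) (R.mul a b) by ac_rfl]
      at this
  have hca : R.mul c a = R.mul a a := sq_add_unique h h1 h3
  have hca2 : R.mul c (R.mul a a) = a := by
    have e : R.mul (R.mul c a) a = R.mul (R.mul a a) a := by rw [hca]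
    rw [h.cube, h.mul_assoc'] at e
    exact e
  have haaa : R.mul a (R.mul a a) = a := by rw [h.mul_comm', h.cube]
  have h8 : R.D (R.mul c c) (R.mul a a) (R.mul (R.mul a a) (R.mul b b)) := by
    have := h.rs8 _ _ _ hc.1
    have e : R.mul (R.mul a (R.mul b b)) (R.mul a (R.mul b b))
        = R.mul (R.mul a a) (R.mul (R.mul b b) (R.mul b b)) := by ac_rfl
    rw [e, pow4 h] at this
    exact this
  have eq1 : R.mul c (R.mul a a) = R.mul a (R.mul a a) := by rw [hca2, haaa]
  have eq2 : R.mul c (R.mul (R.mul a a) (R.mul b b))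
      = R.mul a (R.mul (R.mul a a) (R.mul b b)) := by
    calc R.mul c (R.mul (R.mul a a) (R.mul b b))
        = R.mul (R.mul c (R.mul a a)) (R.mul b b) := (h.mul_assoc' _ _ _).symm
      _ = R.mul a (R.mul b b) := by rw [hca2]
      _ = R.mul (R.mul a (R.mul a a)) (R.mul b b) := by rw [haaa]
      _ = R.mul a (R.mul (R.mul a a) (R.mul b b)) := h.mul_assoc' _ _ _
  have e5 : R.mul c (R.mul c c) = R.mul a (R.mul c c) :=
    h.rs5 c a (R.mul c c) (R.mul a a) (R.mul (R.mul a a) (R.mul b b)) eq1 eq2 h8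
  have hccc : R.mul c (R.mul c c) = c := by rw [h.mul_comm', h.cube]
  rw [hccc] at e5
  calc c = R.mul a (R.mul c c) := e5
    _ = R.mul (R.mul c (R.mul a a)) (R.mul c c) := by rw [hca2]
    _ = R.mul (R.mul (R.mul c c) c) (R.mul a a) := by ac_rfl
    _ = R.mul c (R.mul a a) := by rw [h.cube]
    _ = a := hca2

end RealSGAux


/-- For a real semigroup `(G, ·, 1, 0, −1, D)`, defining `a + b = D^t(a,b)` and
`−g = (−1)·g` yields a real reduced multiring `(G, +, ·, −, 0, 1)`. -/
theorem real_semigroup_to_real_reduced_multiring {S : Type u} (R : RSData S)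
    (h : IsRealSemigroup R) :
    IsRealReducedMultiring (MofRS R) := by
  refine ⟨?_, ?_, ?_, ?_, ?_⟩
  · refine { add_nonempty := ?_, add_comm' := ?_, add_rev := ?_, zero_add' := ?_,
             add_assoc' := ?_, mul_comm' := h.mul_comm', mul_assoc' := h.mul_assoc',
             one_mul' := h.one_mul', mul_zero' := h.mul_zero', distrib := ?_ }
    · intro a b
      exact RealSGAux.add_nonempty' h a b
    · intro a b
      ext c
      exact ⟨fun hc => RealSGAux.Dt_sym h hc, fun hc => RealSGAux.Dt_sym h hc⟩
    · intro a b d hd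
      exact ⟨RealSGAux.Dt_rev1 h hd, RealSGAux.Dt_rev2 h hd⟩
    · intro x y
      exact RealSGAux.zero_add_iff h
    · intro a b c
      ext u
      simp only [Set.mem_iUnion, exists_prop]
      constructor
      · rintro ⟨t, ht, hu⟩
        obtain ⟨x, hx1, hx2⟩ := h.rs3 u c t b a (RealSGAux.Dt_sym h hu) (RealSGAux.Dt_sym h ht)
        exact ⟨x, RealSGAux.Dt_sym h hx1, RealSGAux.Dt_sym h hx2⟩
      · rintro ⟨s, hs, hu⟩
        obtain ⟨x, hx1, hx2⟩ := h.rs3 u a s b c hu hs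
        exact ⟨x, hx1, hx2⟩
    · intro d a b c hc
      exact RealSGAux.Dt_scale h hc d
  · intro h10
    have h10' : R.one = R.zero := h10
    apply h.negone_ne_one
    calc R.negOne = R.mul R.negOne R.one := (RealSGAux.mul_one h _).symm
      _ = R.mul R.negOne R.zero := by rw [h10']
      _ = R.zero := h.mul_zero' _
      _ = R.one := h10'.symm
  · exact h.cube
  · intro a b c hc
    exact RealSGAux.add_self_sq h hc
  · intro a b c d hc hd
    exact RealSGAux.sq_add_unique h hc hd
end
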